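/- Let n ≥ 2, let γ ∈ ℝ be transcendental over ℚ, and let C be an invertible n×n matrix with rational entries. Define a = (a_1, …, a_n) by a_i = Σ_{j=1}^n C_{ij}·γ^j. Then the components of a are linearly independent over ℚ, a is transcendental (not F-algebraic for any real algebraic number field F of degree n), and M(a) = {1, −1}. -/

import Mathlib

/-!
The coordinates of `a` and the powers `γ, γ², …, γⁿ` are related by the invertible rational
matrix `C`, so they span the same `ℚ`-space `W`, and both families are `ℚ`-independent because
`γ` is transcendental.

If the `θ a_i` lie in a number field `F`, then `θ W ⊆ F`, so `F` contains every ratio of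
elements of `W`, in particular `γ = γ² / γ`, which would make `γ` algebraic.

A multiplier `α` maps `W` to itself. Writing `α γ = γ p(γ)` and `α γⁿ = q(γ)` with `deg q ≤ n`
gives `p Xⁿ = q`, so `p` is constant and `α = r ∈ ℚ`. Independence of the `a_i` then forces
`B = r • 1`, and `det B = ±1` gives `rⁿ = ±1`, i.e. `r = ±1`.
-/

open Matrix

/-- The multiplier set of a frequency vector `a`: the set of real numbers `α`
such that some integer matrix `B` of determinant `±1` satisfies `B · a = α • a`. -/
def MultSet {n : ℕ} (a : Fin n → ℝ) : Set ℝ :=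
  {α : ℝ | ∃ B : Matrix (Fin n) (Fin n) ℤ,
    (B.det = 1 ∨ B.det = -1) ∧ ∀ i, α * a i = ∑ j, (B i j : ℝ) * a j}

/-- `a` is `F`-algebraic: for some nonzero `θ`, the numbers `θ * a i` lie in `F`
and form a `ℚ`-basis of `F`. -/
def IsFAlgebraic {n : ℕ} (F : Subfield ℝ) (a : Fin n → ℝ) : Prop :=
  ∃ θ : ℝ, θ ≠ 0 ∧ ∃ bas : Module.Basis (Fin n) ℚ F, ∀ i, (bas i : ℝ) = θ * a i

/-- `MultSet a` is a finite-index subgroup of the unit group of the ring of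
integers of `F`: every multiplier is a unit of `𝓞_F`, and finitely many units
`u i` suffice so that every unit of `𝓞_F` is some `u i` times a multiplier. -/
def MultSetFiniteIndexUnits {n : ℕ} (a : Fin n → ℝ) (F : Subfield ℝ) : Prop :=
  (∀ α ∈ MultSet a, ∃ u : (integralClosure ℤ F)ˣ,
      (((u : integralClosure ℤ F) : F) : ℝ) = α) ∧
  ∃ m : ℕ, ∃ u : Fin m → (integralClosure ℤ F)ˣ,
    ∀ v : (integralClosure ℤ F)ˣ, ∃ i : Fin m, ∃ α ∈ MultSet a,
      (((v : integralClosure ℤ F) : F) : ℝ)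
        = (((u i : integralClosure ℤ F) : F) : ℝ) * α

open Polynomial Set Submodule

theorem Transcendental.linearIndependent_pow {R A : Type*} [CommRing R] [CommRing A]
    [Algebra R A] {x : A} (hx : Transcendental R x) : LinearIndependent R (x ^ · : ℕ → A) := by
  have hpow : (x ^ · : ℕ → A) = Polynomial.aeval x ∘ basisMonomials R := by
    ext k
    simp
  rw [hpow]
  exact (basisMonomials R).linearIndependent.map' (Polynomial.aeval x).toLinearMap
    (LinearMap.ker_eq_bot.mpr (transcendental_iff_injective.mp hx))

section

variable {K M ι : Type*} [Field K] [AddCommGroup M] [Module K M] [Fintype ι] [DecidableEq ι]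
  {v : ι → M} {C : Matrix ι ι K}

theorem LinearIndependent.sum_smul_of_isUnit (hv : LinearIndependent K v) (hC : IsUnit C) :
    LinearIndependent K fun i => ∑ j, C i j • v j := by
  have hrows : (fun i => ∑ j, C i j • v j) = Fintype.linearCombination K v ∘ C.row := by
    ext i
    simp [Fintype.linearCombination_apply]
  rw [hrows]
  exact (Matrix.linearIndependent_rows_iff_isUnit.mpr hC).map' _
    (LinearMap.ker_eq_bot.mpr (linearIndependent_iff_injective_fintypeLinearCombination.mp hv))

theorem Submodule.span_range_sum_smul_of_isUnit (hC : IsUnit C) :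
    span K (range fun i => ∑ j, C i j • v j) = span K (range v) := by
  have hrows : span K (range C.row) = ⊤ := by
    rw [← range_vecMulLinear, LinearMap.range_eq_top]
    exact Matrix.vecMul_surjective_iff_isUnit.mpr hC
  have := congrArg (map (Fintype.linearCombination K v)) hrows
  rw [map_span, map_top, Fintype.range_linearCombination, ← range_comp] at this
  simpa [Function.comp_def, Fintype.linearCombination_apply] using this

theorem LinearIndependent.eq_smul_one_of_smul_eq_sum (hv : LinearIndependent K v) {r : K}
    (h : ∀ i, r • v i = ∑ j, C i j • v j) : C = r • 1 := by
  ext i j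
  refine (Fintype.linearIndependent_iffₛ.mp hv _ _ ?_ j).symm
  simp [← h i, Matrix.one_apply, ite_smul]

end

theorem Transcendental.exists_algebraMap_eq_of_aeval_eq_mul_pow {R A : Type*} [CommRing R]
    [Nontrivial R] [CommRing A] [Algebra R A] {γ α : A} (hγ : Transcendental R γ)
    {p q : R[X]} {n : ℕ} (hp : Polynomial.aeval γ p = α)
    (hq : Polynomial.aeval γ q = α * γ ^ n) (hqn : q.natDegree ≤ n) :
    ∃ r : R, algebraMap R A r = α := by
  have hpq : p * X ^ n = q := transcendental_iff_injective.mp hγ (by simp [hp, hq])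
  obtain rfl | hp0 := eq_or_ne p 0
  · exact ⟨0, by simp [← hp]⟩
  have hp_deg : p.natDegree = 0 := by
    have := natDegree_mul_X_pow n hp0
    rw [hpq] at this
    omega
  exact ⟨p.coeff 0, by rw [← hp, ← aeval_C, ← eq_C_of_natDegree_eq_zero hp_deg]⟩

theorem Transcendental.exists_algebraMap_eq_of_mul_mem_span {K L : Type*} [Field K] [Field L]
    [Algebra K L] {γ α : L} (hγ : Transcendental K γ) {n : ℕ}
    (h₁ : α * γ ∈ span K (range fun j : Fin n => γ ^ ((j : ℕ) + 1)))
    (hₙ : α * γ ^ n ∈ span K (range fun j : Fin n => γ ^ ((j : ℕ) + 1))) :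
    ∃ r : K, algebraMap K L r = α := by
  obtain ⟨c, hc⟩ := (mem_span_range_iff_exists_fun K).mp h₁
  obtain ⟨d, hd⟩ := (mem_span_range_iff_exists_fun K).mp hₙ
  have hγ0 : γ ≠ 0 := fun h => hγ (h ▸ isAlgebraic_zero)
  refine hγ.exists_algebraMap_eq_of_aeval_eq_mul_pow (n := n)
    (p := ∑ j : Fin n, monomial j (c j)) (q := ∑ j : Fin n, monomial (j + 1) (d j)) ?_ ?_ ?_
  · refine mul_right_cancel₀ hγ0 ?_
    simp [← hc, aeval_monomial, Finset.sum_mul, Algebra.smul_def, pow_succ, mul_assoc]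
  · simp [← hd, aeval_monomial, Algebra.smul_def]
  · exact natDegree_sum_le_of_forall_le _ _ fun j _ =>
      (natDegree_monomial_le _).trans (by omega)

theorem Subfield.isAlgebraic_of_mem {L : Type*} [Field L] [CharZero L] {F : Subfield L}
    [FiniteDimensional ℚ F] {x : L} (hx : x ∈ F) : IsAlgebraic ℚ x :=
  (IsAlgebraic.of_finite ℚ (⟨x, hx⟩ : F)).algebraMap (A := L)

theorem IsFAlgebraic.div_mem {n : ℕ} {F : Subfield ℝ} {a : Fin n → ℝ} (h : IsFAlgebraic F a)
    {x y : ℝ} (hx : x ∈ span ℚ (range a)) (hy : y ∈ span ℚ (range a)) : x / y ∈ F := by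
  obtain ⟨θ, hθ, bas, hbas⟩ := h
  have hmul : ∀ z ∈ span ℚ (range a), θ * z ∈ F := fun z hz => by
    induction hz using span_induction with
    | mem z hz =>
      obtain ⟨i, rfl⟩ := hz
      exact hbas i ▸ (bas i).2
    | zero => simp
    | add z w _ _ hz hw => simpa [mul_add] using add_mem hz hw
    | smul q z _ hz => simpa [mul_smul_comm] using SubfieldClass.qsmul_mem F q hz
  simpa [mul_div_mul_left x y hθ] using _root_.div_mem (hmul x hx) (hmul y hy)

section MultSet

variable {n : ℕ} {a : Fin n → ℝ}

theorem one_mem_multSet : (1 : ℝ) ∈ MultSet a :=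
  ⟨1, .inl det_one, fun i => by simp [one_apply]⟩

theorem neg_one_mem_multSet : (-1 : ℝ) ∈ MultSet a :=
  ⟨-1, by simpa [det_neg] using neg_one_pow_eq_or ℤ n, fun i => by simp [one_apply]⟩

theorem mul_mem_span_of_mem_multSet {α x : ℝ} (hα : α ∈ MultSet a)
    (hx : x ∈ span ℚ (range a)) : α * x ∈ span ℚ (range a) := by
  obtain ⟨B, -, hB⟩ := hα
  suffices span ℚ (range a) ≤ (span ℚ (range a)).comap (LinearMap.mulLeft ℚ α) from this hx
  refine span_le.mpr (range_subset_iff.mpr fun i => ?_)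
  rw [SetLike.mem_coe, mem_comap, LinearMap.mulLeft_apply, hB i]
  refine sum_mem fun j _ => ?_
  rw [show (B i j : ℝ) * a j = (B i j : ℚ) • a j by rw [Rat.smul_def, Rat.cast_intCast]]
  exact smul_mem _ _ (subset_span (mem_range_self j))

theorem eq_one_or_neg_one_of_ratCast_mem_multSet (hn : n ≠ 0) (ha : LinearIndependent ℚ a)
    {r : ℚ} (hr : (r : ℝ) ∈ MultSet a) : r = 1 ∨ r = -1 := by
  obtain ⟨B, hdet, hB⟩ := hr
  have hB_scalar : B.map (Int.cast : ℤ → ℚ) = r • 1 :=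
    ha.eq_smul_one_of_smul_eq_sum fun i => by
      simpa [Rat.smul_def] using hB i
  have hpow : r ^ n = B.det := by
    simpa [hB_scalar] using ((Int.castRingHom ℚ).map_det B).symm
  have habs : |r| = 1 := by
    refine (pow_eq_one_iff_of_nonneg (abs_nonneg r) hn).mp ?_
    rw [← abs_pow, hpow]
    rcases hdet with h | h <;> simp [h]
  exact abs_eq zero_le_one |>.mp habs

end MultSet

/-- for `γ` transcendental and `C` an invertible rational
matrix, the vector `a` with `a i = ∑ j, C i j * γ ^ (j+1)` has `ℚ`-linearly
independent components, is transcendental, and has multiplier set `{1, -1}`. -/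
theorem transcendental_flow_example {n : ℕ} (hn : 2 ≤ n) (γ : ℝ)
    (hγ : Transcendental ℚ γ)
    (C : Matrix (Fin n) (Fin n) ℚ) (hC : C.det ≠ 0)
    (a : Fin n → ℝ) (ha : ∀ i, a i = ∑ j, (C i j : ℝ) * γ ^ ((j : ℕ) + 1)) :
    LinearIndependent ℚ a ∧
    (∀ F : Subfield ℝ, Module.finrank ℚ F = n → ¬ IsFAlgebraic F a) ∧
    MultSet a = {1, -1} := by
  let g : Fin n → ℝ := fun j => γ ^ ((j : ℕ) + 1)
  have hγ0 : γ ≠ 0 := fun h => hγ (h ▸ isAlgebraic_zero)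
  have hCu : IsUnit C := (isUnit_iff_isUnit_det C).mpr hC.isUnit
  have ha_sum : a = fun i => ∑ j, C i j • g j := funext fun i => by simp [ha, g, Rat.smul_def]
  have hg : LinearIndependent ℚ g :=
    hγ.linearIndependent_pow.comp _ fun i j h => Fin.ext (Nat.succ_injective h)
  have ha_ind : LinearIndependent ℚ a := ha_sum ▸ hg.sum_smul_of_isUnit hCu
  have ha_span : span ℚ (range a) = span ℚ (range g) :=
    ha_sum ▸ span_range_sum_smul_of_isUnit hCu
  have hg_mem : ∀ j, g j ∈ span ℚ (range a) := fun j => ha_span ▸ subset_span (mem_range_self j)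
  refine ⟨ha_ind, fun F hF hFa => ?_, ?_⟩
  · have : FiniteDimensional ℚ F := Module.finite_of_finrank_pos (by omega)
    have hγF : γ ∈ F := by
      simpa [g, pow_two, hγ0] using hFa.div_mem (hg_mem ⟨1, by omega⟩) (hg_mem ⟨0, by omega⟩)
    exact hγ (Subfield.isAlgebraic_of_mem hγF)
  · ext α
    refine ⟨fun hα => ?_, fun hα => hα.elim (· ▸ one_mem_multSet) (· ▸ neg_one_mem_multSet)⟩
    have hαg : ∀ j, α * g j ∈ span ℚ (range g) :=
      fun j => ha_span ▸ mul_mem_span_of_mem_multSet hα (hg_mem j)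
    obtain ⟨r, rfl⟩ := hγ.exists_algebraMap_eq_of_mul_mem_span (n := n)
      (by simpa [g] using hαg ⟨0, by omega⟩)
      (by simpa [g, Nat.sub_add_cancel (by omega : 1 ≤ n)] using hαg ⟨n - 1, by omega⟩)
    rcases eq_one_or_neg_one_of_ratCast_mem_multSet (by omega) ha_ind hα with rfl | rfl <;> simp
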